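/- For every smooth f : G → ℝ and every x ∈ G: Γ₂(f)(x) = Σ_{i,j=1}^n ( X_i(X_j f)(x) )² + 2 Σ_{i,j=1}^n ( X_i(W_{ij} f)(x) ) · ( X_j f(x) ), where W_{ij}f(x) := f'(x)(0, ω(e_i,e_j)). -/

import Mathlib

noncomputable section

variable {V C : Type*} [NormedAddCommGroup V] [InnerProductSpace ℝ V] [FiniteDimensional ℝ V]
  [NormedAddCommGroup C] [InnerProductSpace ℝ C] [FiniteDimensional ℝ C]

/-- The horizontal (left-invariant) derivative on the finite-dimensional
Heisenberg-like group `G = V × 𝐂`: `(X_{v₀} f)(x) = f'(x)(v₀, ½ ω(x₁, v₀))`. -/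
def Xd (ω : V →L[ℝ] V →L[ℝ] C) (v₀ : V) (f : V × C → ℝ) : V × C → ℝ :=
  fun x => fderiv ℝ f x (v₀, (1 / 2 : ℝ) • ω x.1 v₀)

/-- The vertical derivative on `G = V × 𝐂`: `(Z_{c₀} f)(x) = f'(x)(0, c₀)`. -/
def Zd (c₀ : C) (f : V × C → ℝ) : V × C → ℝ :=
  fun x => fderiv ℝ f x (0, c₀)

/-- The sub-Laplacian `L f = Σ_i X_i(X_i f)`. -/
def Ld {n : ℕ} (ω : V →L[ℝ] V →L[ℝ] C) (e : OrthonormalBasis (Fin n) ℝ V)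
    (f : V × C → ℝ) : V × C → ℝ :=
  fun x => ∑ i, Xd ω (e i) (Xd ω (e i) f) x

/-- The horizontal carré du champ `Γ(f,g) = Σ_i (X_i f)(X_i g)`. -/
def GammaH {n : ℕ} (ω : V →L[ℝ] V →L[ℝ] C) (e : OrthonormalBasis (Fin n) ℝ V)
    (f g : V × C → ℝ) : V × C → ℝ :=
  fun x => ∑ i, Xd ω (e i) f x * Xd ω (e i) g x

/-- The vertical carré du champ `Γ^Z(f,g) = Σ_ℓ (Z_ℓ f)(Z_ℓ g)`. -/
def GammaZ {d : ℕ} (fb : OrthonormalBasis (Fin d) ℝ C)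
    (f g : V × C → ℝ) : V × C → ℝ :=
  fun x => ∑ ℓ, Zd (fb ℓ) f x * Zd (fb ℓ) g x

/-- `Γ₂(f) = ½(L Γ(f) − 2 Γ(f, Lf))`. -/
def Gamma2H {n : ℕ} (ω : V →L[ℝ] V →L[ℝ] C) (e : OrthonormalBasis (Fin n) ℝ V)
    (f : V × C → ℝ) : V × C → ℝ :=
  fun x => (1 / 2 : ℝ) * (Ld ω e (GammaH ω e f f) x - 2 * GammaH ω e f (Ld ω e f) x)

/-- `Γ₂^Z(f) = ½(L Γ^Z(f) − 2 Γ^Z(f, Lf))`. -/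
def Gamma2Z {n d : ℕ} (ω : V →L[ℝ] V →L[ℝ] C) (e : OrthonormalBasis (Fin n) ℝ V)
    (fb : OrthonormalBasis (Fin d) ℝ C) (f : V × C → ℝ) : V × C → ℝ :=
  fun x => (1 / 2 : ℝ) * (Ld ω e (GammaZ fb f f) x - 2 * GammaZ fb f (Ld ω e f) x)

/-- The vertical derivative `W_{ij} f (x) = f'(x)(0, ω(v₁, v₂))`. -/
def Wd (ω : V →L[ℝ] V →L[ℝ] C) (v₁ v₂ : V) (f : V × C → ℝ) : V × C → ℝ :=
  fun x => fderiv ℝ f x (0, ω v₁ v₂)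

namespace HeisAux

set_option linter.unusedSectionVars false in
section

variable {V C : Type*} [NormedAddCommGroup V] [InnerProductSpace ℝ V] [FiniteDimensional ℝ V]
  [NormedAddCommGroup C] [InnerProductSpace ℝ C] [FiniteDimensional ℝ C]
  (ω : V →L[ℝ] V →L[ℝ] C)

/-- linear part of the vector field `x ↦ (w, ½ ω x.1 w)` -/
def Umap (w : V) : (V × C) →L[ℝ] (V × C) :=
  ContinuousLinearMap.prod 0 ((((1/2 : ℝ) • ω.flip w)).comp (ContinuousLinearMap.fst ℝ V C))

omit [FiniteDimensional ℝ V] [FiniteDimensional ℝ C] in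
lemma Umap_apply (w : V) (h : V × C) : Umap ω w h = (0, (1/2:ℝ) • ω h.1 w) := rfl

def Ufun (w : V) : V × C → V × C := fun y => (w, (1/2:ℝ) • ω y.1 w)

omit [FiniteDimensional ℝ V] [FiniteDimensional ℝ C] in
lemma Ufun_eq (w : V) : Ufun ω w = fun y => (w, 0) + Umap ω w y := by
  funext y
  simp [Ufun, Umap_apply, Prod.ext_iff]

omit [FiniteDimensional ℝ V] [FiniteDimensional ℝ C] in
lemma differentiable_Ufun (w : V) : Differentiable ℝ (Ufun ω w) := by
  rw [Ufun_eq]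
  exact (differentiable_const _).add (Umap ω w).differentiable

omit [FiniteDimensional ℝ V] [FiniteDimensional ℝ C] in
lemma fderiv_Ufun (w : V) (x : V × C) : fderiv ℝ (Ufun ω w) x = Umap ω w := by
  rw [Ufun_eq, fderiv_const_add]
  exact (Umap ω w).fderiv

omit [FiniteDimensional ℝ V] [FiniteDimensional ℝ C] in
lemma contDiff_Ufun (w : V) : ContDiff ℝ (⊤ : ℕ∞) (Ufun ω w) := by
  rw [Ufun_eq]
  exact contDiff_const.add (Umap ω w).contDiff

omit [FiniteDimensional ℝ V] [FiniteDimensional ℝ C] in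
lemma Xd_eq (w : V) (f : V × C → ℝ) : Xd ω w f = fun y => fderiv ℝ f y (Ufun ω w y) := rfl

lemma contDiff_fderiv {f : V × C → ℝ} (hf : ContDiff ℝ (⊤ : ℕ∞) f) : ContDiff ℝ (⊤ : ℕ∞) (fderiv ℝ f) :=
  hf.fderiv_right (by simp)

lemma contDiff_Xd (w : V) {f : V × C → ℝ} (hf : ContDiff ℝ (⊤ : ℕ∞) f) : ContDiff ℝ (⊤ : ℕ∞) (Xd ω w f) := by
  rw [Xd_eq]
  exact (contDiff_fderiv hf).clm_apply (contDiff_Ufun ω w)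

lemma contDiff_Zd (c : C) {f : V × C → ℝ} (hf : ContDiff ℝ (⊤ : ℕ∞) f) : ContDiff ℝ (⊤ : ℕ∞) (Zd c f) :=
  (contDiff_fderiv hf).clm_apply contDiff_const

lemma fderiv_Xd_apply (w : V) {f : V × C → ℝ} (hf : ContDiff ℝ (⊤ : ℕ∞) f) (x h : V × C) :
    fderiv ℝ (Xd ω w f) x h
      = fderiv ℝ (fderiv ℝ f) x h (Ufun ω w x) + fderiv ℝ f x (0, (1/2:ℝ) • ω h.1 w) := by
  rw [Xd_eq, fderiv_clm_apply ((contDiff_fderiv hf).differentiable (by simp) x)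
      (differentiable_Ufun ω w x)]
  simp [fderiv_Ufun, Umap_apply, add_comm]

lemma fderiv_Zd_apply (c : C) {f : V × C → ℝ} (hf : ContDiff ℝ (⊤ : ℕ∞) f) (x h : V × C) :
    fderiv ℝ (Zd c f) x h = fderiv ℝ (fderiv ℝ f) x h (0, c) := by
  have : Zd c f = fun y => fderiv ℝ f y ((0 : V), c) := rfl
  rw [this, fderiv_clm_apply ((contDiff_fderiv hf).differentiable (by simp) x)
      (differentiableAt_const _)]
  simp

lemma Xd_Xd (v w : V) {f : V × C → ℝ} (hf : ContDiff ℝ (⊤ : ℕ∞) f) (x : V × C) :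
    Xd ω v (Xd ω w f) x
      = fderiv ℝ (fderiv ℝ f) x (Ufun ω v x) (Ufun ω w x)
        + fderiv ℝ f x (0, (1/2:ℝ) • ω v w) := by
  have h1 : Xd ω v (Xd ω w f) x = fderiv ℝ (Xd ω w f) x (Ufun ω v x) := rfl
  rw [h1, fderiv_Xd_apply ω w hf]
  rfl

lemma Xd_Zd (v : V) (c : C) {f : V × C → ℝ} (hf : ContDiff ℝ (⊤ : ℕ∞) f) (x : V × C) :
    Xd ω v (Zd c f) x = fderiv ℝ (fderiv ℝ f) x (Ufun ω v x) (0, c) := by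
  have h1 : Xd ω v (Zd c f) x = fderiv ℝ (Zd c f) x (Ufun ω v x) := rfl
  rw [h1, fderiv_Zd_apply c hf]

lemma Zd_Xd (v : V) (c : C) {f : V × C → ℝ} (hf : ContDiff ℝ (⊤ : ℕ∞) f) (x : V × C) :
    Zd c (Xd ω v f) x = fderiv ℝ (fderiv ℝ f) x ((0 : V), c) (Ufun ω v x) := by
  have h1 : Zd c (Xd ω v f) x = fderiv ℝ (Xd ω v f) x ((0 : V), c) := rfl
  rw [h1, fderiv_Xd_apply ω v hf]
  simp
  exact (fderiv ℝ f x).map_zero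

lemma symm2 {f : V × C → ℝ} (hf : ContDiff ℝ (⊤ : ℕ∞) f) (x a b : V × C) :
    fderiv ℝ (fderiv ℝ f) x a b = fderiv ℝ (fderiv ℝ f) x b a :=
  (hf.contDiffAt.isSymmSndFDerivAt (by rw [minSmoothness_of_isRCLikeNormedField]; exact WithTop.coe_le_coe.2 le_top)) a b

/-- key commutator (b): `X_v (Z_c f) = Z_c (X_v f)` as functions -/
lemma Xd_Zd_comm (v : V) (c : C) {f : V × C → ℝ} (hf : ContDiff ℝ (⊤ : ℕ∞) f) :
    Xd ω v (Zd c f) = Zd c (Xd ω v f) := by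
  funext x
  rw [Xd_Zd ω v c hf, Zd_Xd ω v c hf, symm2 hf]

/-- key commutator (a): `X_v (X_w f) = X_w (X_v f) + Z_{ω v w} f` as functions -/
lemma Xd_Xd_comm (v w : V) (hskew : ∀ v w : V, ω v w = -ω w v) {f : V × C → ℝ}
    (hf : ContDiff ℝ (⊤ : ℕ∞) f) :
    Xd ω v (Xd ω w f) = fun x => Xd ω w (Xd ω v f) x + Zd (ω v w) f x := by
  funext x
  rw [Xd_Xd ω v w hf, Xd_Xd ω w v hf, symm2 hf]
  have : ((0 : V), (1/2:ℝ) • ω v w) = ((0:V), (1/2:ℝ) • ω w v) + ((0:V), ω v w) := by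
    simp only [Prod.mk_add_mk, Prod.mk.injEq]
    refine ⟨by simp, ?_⟩
    rw [hskew w v]; module
  rw [Zd, this, map_add]
  ring

omit [FiniteDimensional ℝ V] [FiniteDimensional ℝ C] in
lemma Xd_add (w : V) {g h : V × C → ℝ} {x : V × C}
    (hg : DifferentiableAt ℝ g x) (hh : DifferentiableAt ℝ h x) :
    Xd ω w (fun y => g y + h y) x = Xd ω w g x + Xd ω w h x := by
  show fderiv ℝ (fun y => g y + h y) x _ = _
  rw [fderiv_fun_add hg hh]
  rfl

omit [FiniteDimensional ℝ V] [FiniteDimensional ℝ C] in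
lemma Xd_mul (w : V) {g h : V × C → ℝ} {x : V × C}
    (hg : DifferentiableAt ℝ g x) (hh : DifferentiableAt ℝ h x) :
    Xd ω w (fun y => g y * h y) x = Xd ω w g x * h x + g x * Xd ω w h x := by
  show fderiv ℝ (fun y => g y * h y) x _ = _
  rw [fderiv_fun_mul hg hh]
  simp [Xd]
  ring

omit [FiniteDimensional ℝ V] [FiniteDimensional ℝ C] in
lemma Xd_sum {ι : Type*} (w : V) (s : Finset ι) (G : ι → V × C → ℝ) {x : V × C}
    (hG : ∀ i ∈ s, DifferentiableAt ℝ (G i) x) :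
    Xd ω w (fun y => ∑ i ∈ s, G i y) x = ∑ i ∈ s, Xd ω w (G i) x := by
  show fderiv ℝ (fun y => ∑ i ∈ s, G i y) x _ = _
  rw [fderiv_fun_sum hG]
  simp [Xd]

/-- key third-order identity: `X_v X_v X_w f = X_w X_v X_v f + 2 X_v Z_{ω v w} f`. -/
lemma key (hskew : ∀ v w : V, ω v w = -ω w v) (v w : V) {f : V × C → ℝ}
    (hf : ContDiff ℝ (⊤ : ℕ∞) f) (x : V × C) :
    Xd ω v (Xd ω v (Xd ω w f)) x
      = Xd ω w (Xd ω v (Xd ω v f)) x + 2 * Xd ω v (Zd (ω v w) f) x := by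
  have hXv : ContDiff ℝ (⊤ : ℕ∞) (Xd ω v f) := contDiff_Xd ω v hf
  have h1 : Xd ω v (Xd ω v (Xd ω w f)) x
      = Xd ω v (Xd ω w (Xd ω v f)) x + Xd ω v (Zd (ω v w) f) x := by
    rw [Xd_Xd_comm ω v w hskew hf]
    exact Xd_add ω v ((contDiff_Xd ω w hXv).differentiable (by simp) x)
      ((contDiff_Zd (ω v w) hf).differentiable (by simp) x)
  have h2 : Xd ω v (Xd ω w (Xd ω v f)) x
      = Xd ω w (Xd ω v (Xd ω v f)) x + Zd (ω v w) (Xd ω v f) x :=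
    congrFun (Xd_Xd_comm ω v w hskew hXv) x
  have h3 : Zd (ω v w) (Xd ω v f) x = Xd ω v (Zd (ω v w) f) x :=
    (congrFun (Xd_Zd_comm ω v (ω v w) hf) x).symm
  rw [h1, h2, h3]
  ring

end

end HeisAux

namespace HeisAux

lemma sum_helper {n : ℕ} (a b c : Fin n → Fin n → ℝ) (F : Fin n → ℝ) :
    ∑ i, ∑ j, (2 * a i j + 2 * (F j * (b i j + 2 * c i j)))
      = 2 * (∑ i, ∑ j, a i j) + 2 * (∑ i, ∑ j, F j * b i j)
        + 4 * (∑ i, ∑ j, c i j * F j) := by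
  have h1 : ∀ i j : Fin n, 2 * a i j + 2 * (F j * (b i j + 2 * c i j))
      = 2 * a i j + (2 * (F j * b i j) + 4 * (c i j * F j)) := fun i j => by ring
  simp only [h1, Finset.sum_add_distrib, Finset.mul_sum]
  ring

end HeisAux

/-- On the finite-dimensional Heisenberg-like group `G = V × 𝐂`, for smooth `f`:
`Γ₂(f)(x) = Σ_{i,j} (X_i X_j f (x))² + 2 Σ_{i,j} (X_i (W_{ij} f) (x)) (X_j f (x))`. -/
theorem gamma2_expansion {n : ℕ}
    (ω : V →L[ℝ] V →L[ℝ] C) (hskew : ∀ v w : V, ω v w = -ω w v)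
    (e : OrthonormalBasis (Fin n) ℝ V)
    (f : V × C → ℝ) (hf : ContDiff ℝ (⊤ : ℕ∞) f) (x : V × C) :
    Gamma2H ω e f x
      = (∑ i, ∑ j, (Xd ω (e i) (Xd ω (e j) f) x) ^ 2)
        + 2 * ∑ i, ∑ j, (Xd ω (e i) (Wd ω (e i) (e j) f) x) * (Xd ω (e j) f x) := by
  classical
  have hd : ∀ (g : V × C → ℝ), ContDiff ℝ (⊤ : ℕ∞) g → ∀ y : V × C, DifferentiableAt ℝ g y :=
    fun g hg y => hg.differentiable (by simp) y
  have hFs : ∀ j : Fin n, ContDiff ℝ (⊤ : ℕ∞) (Xd ω (e j) f) :=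
    fun j => HeisAux.contDiff_Xd ω (e j) hf
  have hAs : ∀ i j : Fin n, ContDiff ℝ (⊤ : ℕ∞) (Xd ω (e i) (Xd ω (e j) f)) :=
    fun i j => HeisAux.contDiff_Xd ω (e i) (hFs j)
  -- first derivative of Γ(f,f)
  have step1 : ∀ i : Fin n, Xd ω (e i) (GammaH ω e f f)
      = fun y => ∑ j, (Xd ω (e i) (Xd ω (e j) f) y * Xd ω (e j) f y
          + Xd ω (e j) f y * Xd ω (e i) (Xd ω (e j) f) y) := by
    intro i; funext y
    have h2 := HeisAux.Xd_sum ω (e i) Finset.univ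
        (fun j => fun z => Xd ω (e j) f z * Xd ω (e j) f z) (x := y)
        (fun j _ => (hd _ (hFs j) y).mul (hd _ (hFs j) y))
    refine h2.trans ?_
    exact Finset.sum_congr rfl fun j _ =>
      HeisAux.Xd_mul ω (e i) (hd _ (hFs j) y) (hd _ (hFs j) y)
  -- second derivative of Γ(f,f)
  have step2 : ∀ i : Fin n, Xd ω (e i) (Xd ω (e i) (GammaH ω e f f)) x
      = ∑ j, (2 * (Xd ω (e i) (Xd ω (e j) f) x) ^ 2
          + 2 * (Xd ω (e j) f x * Xd ω (e i) (Xd ω (e i) (Xd ω (e j) f)) x)) := by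
    intro i
    rw [step1 i]
    have h2 := HeisAux.Xd_sum ω (e i) Finset.univ
        (fun j => fun y => Xd ω (e i) (Xd ω (e j) f) y * Xd ω (e j) f y
          + Xd ω (e j) f y * Xd ω (e i) (Xd ω (e j) f) y) (x := x)
        (fun j _ => ((hd _ (hAs i j) x).mul (hd _ (hFs j) x)).add
          ((hd _ (hFs j) x).mul (hd _ (hAs i j) x)))
    refine h2.trans ?_
    refine Finset.sum_congr rfl fun j _ => ?_
    have h3 := HeisAux.Xd_add ω (e i)
        (g := fun y => Xd ω (e i) (Xd ω (e j) f) y * Xd ω (e j) f y)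
        (h := fun y => Xd ω (e j) f y * Xd ω (e i) (Xd ω (e j) f) y) (x := x)
        ((hd _ (hAs i j) x).mul (hd _ (hFs j) x)) ((hd _ (hFs j) x).mul (hd _ (hAs i j) x))
    refine h3.trans ?_
    rw [HeisAux.Xd_mul ω (e i) (hd _ (hAs i j) x) (hd _ (hFs j) x),
      HeisAux.Xd_mul ω (e i) (hd _ (hFs j) x) (hd _ (hAs i j) x)]
    show _ = 2 * (Xd ω (e i) (Xd ω (e j) f) x) ^ 2
      + 2 * (Xd ω (e j) f x * Xd ω (e i) (Xd ω (e i) (Xd ω (e j) f)) x)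
    ring
  -- L Γ(f,f)
  have E1 : Ld ω e (GammaH ω e f f) x
      = ∑ i, ∑ j, (2 * (Xd ω (e i) (Xd ω (e j) f) x) ^ 2
          + 2 * (Xd ω (e j) f x * (Xd ω (e j) (Xd ω (e i) (Xd ω (e i) f)) x
            + 2 * Xd ω (e i) (Zd (ω (e i) (e j)) f) x))) := by
    refine Finset.sum_congr rfl fun i _ => ?_
    refine (step2 i).trans ?_
    refine Finset.sum_congr rfl fun j _ => ?_
    rw [HeisAux.key ω hskew (e i) (e j) hf x]
  -- Γ(f, Lf)
  have E2 : GammaH ω e f (Ld ω e f) x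
      = ∑ i, ∑ j, Xd ω (e j) f x * Xd ω (e j) (Xd ω (e i) (Xd ω (e i) f)) x := by
    rw [Finset.sum_comm]
    refine Finset.sum_congr rfl fun j _ => ?_
    have h4 := HeisAux.Xd_sum ω (e j) Finset.univ
        (fun i => Xd ω (e i) (Xd ω (e i) f)) (x := x)
        (fun i _ => hd _ (HeisAux.contDiff_Xd ω (e i) (hFs i)) x)
    show Xd ω (e j) f x * Xd ω (e j) (Ld ω e f) x = _
    rw [show Xd ω (e j) (Ld ω e f) x
        = ∑ i, Xd ω (e j) (Xd ω (e i) (Xd ω (e i) f)) x from h4, Finset.mul_sum]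
  -- assemble
  have hGamma2 : Gamma2H ω e f x
      = (1 / 2 : ℝ) * (Ld ω e (GammaH ω e f f) x - 2 * GammaH ω e f (Ld ω e f) x) := rfl
  have hW : ∀ i j : Fin n, Wd ω (e i) (e j) f = Zd (ω (e i) (e j)) f := fun _ _ => rfl
  simp only [hW]
  rw [hGamma2, E1, E2, HeisAux.sum_helper]
  ring
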